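/- arXiv:2001.08469 — 10 statements merged into one kernel-verified Lean document; each statement's English description precedes it below -/
import Mathlib

section
/- Let h : ℝ → ℝ be differentiable. Define S(φ₁, φ₂) = 2·h((φ₁+φ₂)/2)·sin((φ₂−φ₁)/2) and γ(ψ) = h(ψ)·(cos ψ, sin ψ) + h'(ψ)·(−sin ψ, cos ψ) ∈ ℝ². Then for all φ₁, φ₂ ∈ ℝ, writing ψ = (φ₁+φ₂)/2, the partial derivatives of S satisfy ∂S/∂φ₁(φ₁, φ₂) = −⟨γ(ψ), (cos φ₁, sin φ₁)⟩ and ∂S/∂φ₂(φ₁, φ₂) = ⟨γ(ψ), (cos φ₂, sin φ₂)⟩. -/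
open Real

/-! Write `ψ = (φ₁ + φ₂)/2` and `θ = (φ₂ - φ₁)/2`. In the moving frame `(cos ψ, sin ψ)`,
`(-sin ψ, cos ψ)` the unit vector of angle `ψ ± θ` has coordinates `(cos θ, ± sin θ)`, so
`⟨γ(ψ), (cos φ₂, sin φ₂)⟩ = h(ψ) cos θ + h'(ψ) sin θ`, which is exactly the chain rule
derivative of `2 h(ψ) sin θ` in `φ₂`. The identity for `φ₁` follows from the antisymmetry
`S(φ₁, φ₂) = -S(φ₂, φ₁)`. -/

lemma inner_rotatingFrame (a b ψ φ : ℝ) :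
    inner ℝ (a • (WithLp.toLp 2 ![cos ψ, sin ψ] : EuclideanSpace ℝ (Fin 2))
        + b • (WithLp.toLp 2 ![-sin ψ, cos ψ] : EuclideanSpace ℝ (Fin 2)))
      (WithLp.toLp 2 ![cos φ, sin φ] : EuclideanSpace ℝ (Fin 2))
      = a * cos (φ - ψ) + b * sin (φ - ψ) := by
  simp only [PiLp.inner_apply, Fin.sum_univ_two, PiLp.add_apply, PiLp.smul_apply,
    Matrix.cons_val_zero, Matrix.cons_val_one, smul_eq_mul,
    RCLike.inner_apply, conj_trivial, cos_sub, sin_sub]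
  ring

lemma hasDerivAt_generatingFunction_snd {h : ℝ → ℝ} {h' a b : ℝ}
    (hh : HasDerivAt h h' ((a + b) / 2)) :
    HasDerivAt (fun y => 2 * h ((a + y) / 2) * sin ((y - a) / 2))
      (h ((a + b) / 2) * cos ((b - a) / 2) + h' * sin ((b - a) / 2)) b := by
  have hmid : HasDerivAt (fun y : ℝ => (a + y) / 2) (1 / 2) b := by
    simpa using ((hasDerivAt_id b).const_add a).div_const 2
  have hhalf : HasDerivAt (fun y : ℝ => (y - a) / 2) (1 / 2) b := by
    simpa using ((hasDerivAt_id b).sub_const a).div_const 2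
  exact (((hh.comp b hmid).const_mul 2).mul ((hasDerivAt_sin _).comp b hhalf)).congr_deriv
    (by simp only [Function.comp_def]; ring)

/-- The non-standard generating function `S(φ₁,φ₂) = 2 h((φ₁+φ₂)/2) sin((φ₂-φ₁)/2)`
has partial derivatives `-⟨γ(ψ), (cos φ₁, sin φ₁)⟩` and `⟨γ(ψ), (cos φ₂, sin φ₂)⟩`,
where `γ(ψ) = h(ψ)(cos ψ, sin ψ) + h'(ψ)(-sin ψ, cos ψ)` and `ψ = (φ₁+φ₂)/2`. -/
theorem stmt_0 (h : ℝ → ℝ) (hd : Differentiable ℝ h)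
    (S : ℝ → ℝ → ℝ)
    (hS : ∀ φ₁ φ₂ : ℝ, S φ₁ φ₂ = 2 * h ((φ₁ + φ₂) / 2) * Real.sin ((φ₂ - φ₁) / 2))
    (γ : ℝ → EuclideanSpace ℝ (Fin 2))
    (hγ : ∀ ψ : ℝ, γ ψ = h ψ • (WithLp.toLp 2 ![Real.cos ψ, Real.sin ψ] : EuclideanSpace ℝ (Fin 2))
        + deriv h ψ • (WithLp.toLp 2 ![-Real.sin ψ, Real.cos ψ] : EuclideanSpace ℝ (Fin 2)))
    (φ₁ φ₂ : ℝ) :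
    deriv (fun x => S x φ₂) φ₁
        = -(inner ℝ (γ ((φ₁ + φ₂) / 2))
            (WithLp.toLp 2 ![Real.cos φ₁, Real.sin φ₁] : EuclideanSpace ℝ (Fin 2)) : ℝ)
      ∧ deriv (fun y => S φ₁ y) φ₂
        = (inner ℝ (γ ((φ₁ + φ₂) / 2))
            (WithLp.toLp 2 ![Real.cos φ₂, Real.sin φ₂] : EuclideanSpace ℝ (Fin 2)) : ℝ) := by
  have hS_antisymm :
      (fun x => S x φ₂) = -fun x => 2 * h ((φ₂ + x) / 2) * sin ((x - φ₂) / 2) := by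
    funext x
    simp only [Pi.neg_apply]
    rw [hS, add_comm, ← neg_sub x φ₂, neg_div, sin_neg]
    ring
  have hψ₁ : (φ₂ + φ₁) / 2 = (φ₁ + φ₂) / 2 := by ring
  have hθ₁ : (φ₁ - φ₂) / 2 = φ₁ - (φ₁ + φ₂) / 2 := by ring
  have hθ₂ : (φ₂ - φ₁) / 2 = φ₂ - (φ₁ + φ₂) / 2 := by ring
  constructor
  · rw [hS_antisymm, deriv.neg, (hasDerivAt_generatingFunction_snd (hd _).hasDerivAt).deriv, hγ,
      inner_rotatingFrame, hψ₁, hθ₁]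
  · simp only [hS]
    rw [(hasDerivAt_generatingFunction_snd (hd _).hasDerivAt).deriv, hγ, inner_rotatingFrame, hθ₂]
end

section
/- Under the billiard polygon setup, the sum of the values of the non-standard generating function over the orbit equals the perimeter: Σ_{i=1}^{n} 2·h(ψᵢ)·sin δᵢ = L. -/
/-!
With `uᵢ = (-sin φᵢ, cos φᵢ)` the direction of the side `MᵢMᵢ₊₁`, the chord condition gives
`‖Mᵢ₊₁ - Mᵢ‖ = ⟪Mᵢ₊₁ - Mᵢ, uᵢ⟫`. Summing by parts around the closed polygon turns the perimeter
into `∑ ⟪Mᵢ, uᵢ₋₁ - uᵢ⟫`, and `uᵢ₋₁ - uᵢ = 2 sin δᵢ (cos ψᵢ, sin ψᵢ)` is a multiple of the outer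
normal at `Mᵢ`, along which `Mᵢ` has component `h(ψᵢ)`.
-/

open Real Finset
open scoped InnerProductSpace

theorem Finset.sum_Icc_one_succ_of_eq {M : Type*} [AddCommMonoid M] (g : ℕ → M) {n : ℕ}
    (hg : g (n + 1) = g 1) : ∑ i ∈ Icc 1 n, g (i + 1) = ∑ i ∈ Icc 1 n, g i := by
  cases n with
  | zero => rfl
  | succ m =>
    simp only [← Finset.Ico_add_one_right_eq_Icc, Finset.sum_Ico_eq_sum_range,
      add_tsub_cancel_right]
    rw [Finset.sum_range_succ, Finset.sum_range_succ', add_comm 1 m, hg]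
    simp only [add_assoc, add_zero]

section InnerProductSpace

variable {E : Type*} [NormedAddCommGroup E] [InnerProductSpace ℝ E]

theorem sum_inner_sub_eq_sum_inner_sub_of_cyclic (x y : ℕ → E) {n : ℕ}
    (hx : x (n + 1) = x 1) (hy : y n = y 0) :
    ∑ i ∈ Icc 1 n, ⟪x (i + 1) - x i, y i⟫_ℝ = ∑ i ∈ Icc 1 n, ⟪x i, y (i - 1) - y i⟫_ℝ := by
  have hshift := Finset.sum_Icc_one_succ_of_eq (fun i => ⟪x i, y (i - 1)⟫_ℝ) (n := n)
    (by simp only [add_tsub_cancel_right, hx, hy, tsub_self])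
  simp only [add_tsub_cancel_right] at hshift
  simp only [inner_sub_left, inner_sub_right, Finset.sum_sub_distrib, hshift]

theorem norm_eq_inner_of_eq_nonneg_smul {u v : E} (hu : ‖u‖ = 1) {t : ℝ} (ht : 0 ≤ t)
    (hv : v = t • u) : ‖v‖ = ⟪v, u⟫_ℝ := by
  rw [hv, norm_smul, real_inner_smul_left, real_inner_self_eq_norm_sq, hu, Real.norm_of_nonneg ht]
  ring

end InnerProductSpace

noncomputable def unitVec (θ : ℝ) : EuclideanSpace ℝ (Fin 2) := !₂[cos θ, sin θ]

noncomputable def unitVecPerp (θ : ℝ) : EuclideanSpace ℝ (Fin 2) := !₂[-sin θ, cos θ]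

theorem norm_unitVec (θ : ℝ) : ‖unitVec θ‖ = 1 := by
  simp [unitVec, EuclideanSpace.norm_eq, Fin.sum_univ_two]

theorem inner_unitVec_self (θ : ℝ) : ⟪unitVec θ, unitVec θ⟫_ℝ = 1 := by
  rw [real_inner_self_eq_norm_sq, norm_unitVec, one_pow]

theorem inner_unitVecPerp_unitVec (θ : ℝ) : ⟪unitVecPerp θ, unitVec θ⟫_ℝ = 0 := by
  simp [unitVec, unitVecPerp, PiLp.inner_apply, Fin.sum_univ_two, mul_comm]

theorem norm_unitVecPerp (θ : ℝ) : ‖unitVecPerp θ‖ = 1 := by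
  simp [unitVecPerp, EuclideanSpace.norm_eq, Fin.sum_univ_two]

theorem unitVecPerp_add_two_pi (θ : ℝ) : unitVecPerp (θ + 2 * π) = unitVecPerp θ := by
  simp [unitVecPerp]

theorem unitVecPerp_sub_unitVecPerp (a b : ℝ) :
    unitVecPerp a - unitVecPerp b = (2 * sin ((b - a) / 2)) • unitVec ((a + b) / 2) := by
  have hsin : -sin a + sin b = 2 * sin ((b - a) / 2) * cos ((a + b) / 2) := by
    rw [neg_add_eq_sub, sin_sub_sin, add_comm b a]
  have hcos : cos a - cos b = 2 * sin ((b - a) / 2) * sin ((a + b) / 2) := by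
    rw [cos_sub_cos, show (a - b) / 2 = -((b - a) / 2) by ring, sin_neg]
    ring
  ext i
  fin_cases i <;> simp [unitVecPerp, unitVec, hsin, hcos]

theorem inner_smul_unitVec_add_smul_unitVecPerp_unitVec (a b θ : ℝ) :
    ⟪a • unitVec θ + b • unitVecPerp θ, unitVec θ⟫_ℝ = a := by
  rw [inner_add_left, real_inner_smul_left, real_inner_smul_left, inner_unitVec_self,
    inner_unitVecPerp_unitVec]
  ring

theorem stmt_2_general (h : ℝ → ℝ)
    (n : ℕ)
    (φ ψ δ : ℕ → ℝ)
    (hφ : φ n = φ 0 + 2 * Real.pi)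
    (hψ : ∀ i ∈ Finset.Icc 1 n, ψ i = (φ (i - 1) + φ i) / 2)
    (hδ : ∀ i ∈ Finset.Icc 1 n, δ i = (φ i - φ (i - 1)) / 2)
    (M : ℕ → EuclideanSpace ℝ (Fin 2))
    (hM : ∀ i ∈ Finset.Icc 1 n, M i
        = h (ψ i) • (WithLp.toLp 2 ![Real.cos (ψ i), Real.sin (ψ i)] : EuclideanSpace ℝ (Fin 2))
        + deriv h (ψ i) • (WithLp.toLp 2 ![-Real.sin (ψ i), Real.cos (ψ i)] : EuclideanSpace ℝ (Fin 2)))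
    (hMwrap : M (n + 1) = M 1)
    (chord : ∀ i ∈ Finset.Icc 1 n, ∃ t : ℝ, 0 < t ∧
        M (i + 1) - M i = t • (WithLp.toLp 2 ![-Real.sin (φ i), Real.cos (φ i)] : EuclideanSpace ℝ (Fin 2)))
    (L : ℝ) (hL : L = ∑ i ∈ Finset.Icc 1 n, ‖M (i + 1) - M i‖) :
    ∑ i ∈ Finset.Icc 1 n, 2 * h (ψ i) * Real.sin (δ i) = L := by
  have hM' : ∀ i ∈ Icc 1 n,
      M i = h (ψ i) • unitVec (ψ i) + deriv h (ψ i) • unitVecPerp (ψ i) := hM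
  have hside : ∀ i ∈ Icc 1 n, ‖M (i + 1) - M i‖ = ⟪M (i + 1) - M i, unitVecPerp (φ i)⟫_ℝ := by
    intro i hi
    obtain ⟨t, ht, hMt⟩ := chord i hi
    exact norm_eq_inner_of_eq_nonneg_smul (norm_unitVecPerp _) ht.le hMt
  have hturn : ∀ i ∈ Icc 1 n,
      unitVecPerp (φ (i - 1)) - unitVecPerp (φ i) = (2 * sin (δ i)) • unitVec (ψ i) := by
    intro i hi
    rw [unitVecPerp_sub_unitVecPerp, hψ i hi, hδ i hi]
  rw [hL, sum_congr rfl hside, sum_inner_sub_eq_sum_inner_sub_of_cyclic M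
    (fun i => unitVecPerp (φ i)) hMwrap (by rw [hφ, unitVecPerp_add_two_pi])]
  refine sum_congr rfl fun i hi => ?_
  rw [hturn i hi, real_inner_smul_right, hM' i hi,
    inner_smul_unitVec_add_smul_unitVecPerp_unitVec]
  ring

/-- For a billiard `n`-gon in a smooth convex curve with support function `h`,
the sum of the values of the non-standard generating function over the orbit
equals the perimeter: `∑ 2 h(ψᵢ) sin δᵢ = L`. -/
theorem stmt_2 (h : ℝ → ℝ) (hd : Differentiable ℝ h)
    (n : ℕ) (hn : 2 ≤ n)
    (φ ψ δ : ℕ → ℝ)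
    (hφ : φ n = φ 0 + 2 * Real.pi)
    (hψ : ∀ i ∈ Finset.Icc 1 n, ψ i = (φ (i - 1) + φ i) / 2)
    (hδ : ∀ i ∈ Finset.Icc 1 n, δ i = (φ i - φ (i - 1)) / 2)
    (M : ℕ → EuclideanSpace ℝ (Fin 2))
    (hM : ∀ i ∈ Finset.Icc 1 n, M i
        = h (ψ i) • (WithLp.toLp 2 ![Real.cos (ψ i), Real.sin (ψ i)] : EuclideanSpace ℝ (Fin 2))
        + deriv h (ψ i) • (WithLp.toLp 2 ![-Real.sin (ψ i), Real.cos (ψ i)] : EuclideanSpace ℝ (Fin 2)))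
    (hMwrap : M (n + 1) = M 1)
    (chord : ∀ i ∈ Finset.Icc 1 n, ∃ t : ℝ, 0 < t ∧
        M (i + 1) - M i = t • (WithLp.toLp 2 ![-Real.sin (φ i), Real.cos (φ i)] : EuclideanSpace ℝ (Fin 2)))
    (L : ℝ) (hL : L = ∑ i ∈ Finset.Icc 1 n, ‖M (i + 1) - M i‖) :
    ∑ i ∈ Finset.Icc 1 n, 2 * h (ψ i) * Real.sin (δ i) = L :=
  stmt_2_general h n φ ψ δ hφ hψ hδ M hM hMwrap chord L hL
end

section
/- Under the billiard polygon setup, Σ_{i=1}^{n} h'(ψᵢ)·sin δᵢ = 0. -/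
/-!
Project the vertices onto the unit vectors `u(θ) = (cos θ, sin θ)`. For the point
`Mᵢ = h(ψᵢ) u(ψᵢ) + h'(ψᵢ) u'(ψᵢ)` one has `⟪Mᵢ, u(θ)⟫ = h(ψᵢ) cos(θ - ψᵢ) + h'(ψᵢ) sin(θ - ψᵢ)`,
so since `φᵢ = ψᵢ + δᵢ` and `φᵢ₋₁ = ψᵢ - δᵢ`,
`⟪Mᵢ, u(φᵢ)⟫ - ⟪Mᵢ, u(φᵢ₋₁)⟫ = 2 h'(ψᵢ) sin δᵢ`.
The chord `Mᵢ₊₁ - Mᵢ` is orthogonal to `u(φᵢ)`, so `⟪Mᵢ, u(φᵢ)⟫ = ⟪Mᵢ₊₁, u(φᵢ)⟫`, and the sum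
telescopes in `qᵢ = ⟪Mᵢ, u(φᵢ₋₁)⟫`; it vanishes because `φₙ ≡ φ₀ mod 2π` and `Mₙ₊₁ = M₁`.
-/

open Real
open scoped InnerProductSpace

lemma inner_vec2 (a b c d : ℝ) : ⟪!₂[a, b], !₂[c, d]⟫_ℝ = a * c + b * d := by
  simp [PiLp.inner_apply, Fin.sum_univ_two]
  ring

lemma inner_smul_add_smul_unit (a b ψ θ : ℝ) :
    ⟪a • !₂[cos ψ, sin ψ] + b • !₂[-sin ψ, cos ψ], !₂[cos θ, sin θ]⟫_ℝ
      = a * cos (θ - ψ) + b * sin (θ - ψ) := by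
  simp only [inner_add_left, inner_smul_left, inner_vec2, cos_sub, sin_sub, conj_trivial]
  ring

lemma inner_smul_add_smul_unit_sub (a b ψ δ : ℝ) :
    ⟪a • !₂[cos ψ, sin ψ] + b • !₂[-sin ψ, cos ψ], !₂[cos (ψ + δ), sin (ψ + δ)]⟫_ℝ
      - ⟪a • !₂[cos ψ, sin ψ] + b • !₂[-sin ψ, cos ψ], !₂[cos (ψ - δ), sin (ψ - δ)]⟫_ℝ
      = 2 * b * sin δ := by
  simp only [inner_smul_add_smul_unit, add_sub_cancel_left, sub_sub_cancel_left, cos_neg, sin_neg]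
  ring

lemma inner_perp_unit (φ : ℝ) : ⟪!₂[-sin φ, cos φ], !₂[cos φ, sin φ]⟫_ℝ = 0 := by
  rw [inner_vec2]
  ring

theorem stmt_3_general (h : ℝ → ℝ)
    (n : ℕ)
    (φ ψ δ : ℕ → ℝ)
    (hφ : φ n = φ 0 + 2 * Real.pi)
    (hψ : ∀ i ∈ Finset.Icc 1 n, ψ i = (φ (i - 1) + φ i) / 2)
    (hδ : ∀ i ∈ Finset.Icc 1 n, δ i = (φ i - φ (i - 1)) / 2)
    (M : ℕ → EuclideanSpace ℝ (Fin 2))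
    (hM : ∀ i ∈ Finset.Icc 1 n, M i
        = h (ψ i) • (WithLp.toLp 2 ![Real.cos (ψ i), Real.sin (ψ i)] : EuclideanSpace ℝ (Fin 2))
        + deriv h (ψ i) • (WithLp.toLp 2 ![-Real.sin (ψ i), Real.cos (ψ i)] : EuclideanSpace ℝ (Fin 2)))
    (hMwrap : M (n + 1) = M 1)
    (chord : ∀ i ∈ Finset.Icc 1 n, ∃ t : ℝ, 0 < t ∧
        M (i + 1) - M i = t • (WithLp.toLp 2 ![-Real.sin (φ i), Real.cos (φ i)] : EuclideanSpace ℝ (Fin 2))) :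
    ∑ i ∈ Finset.Icc 1 n, deriv h (ψ i) * Real.sin (δ i) = 0 := by
  set q : ℕ → ℝ := fun i => ⟪M i, !₂[cos (φ (i - 1)), sin (φ (i - 1))]⟫_ℝ
  have hstep : ∀ i ∈ Finset.Icc 1 n, deriv h (ψ i) * sin (δ i) = (q (i + 1) - q i) / 2 := by
    intro i hi
    obtain ⟨t, -, ht⟩ := chord i hi
    have hq_succ : q (i + 1) = ⟪M i, !₂[cos (φ i), sin (φ i)]⟫_ℝ := by
      simp only [q, add_tsub_cancel_right, sub_eq_iff_eq_add'.mp ht, inner_add_left,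
        inner_smul_left, inner_perp_unit, mul_zero, add_zero]
    have hφi : φ i = ψ i + δ i := by linarith [hψ i hi, hδ i hi]
    have hφi' : φ (i - 1) = ψ i - δ i := by linarith [hψ i hi, hδ i hi]
    have hproj := inner_smul_add_smul_unit_sub (h (ψ i)) (deriv h (ψ i)) (ψ i) (δ i)
    rw [← hφi, ← hφi', ← hM i hi] at hproj
    simp only [hq_succ, q, hproj]
    ring
  have hq_wrap : q (n + 1) = q 1 := by
    simp [q, hMwrap, hφ]
  rw [Finset.sum_congr rfl hstep, ← Finset.sum_div, ← Finset.Ico_add_one_right_eq_Icc,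
    Finset.sum_Ico_sub q (by omega), hq_wrap, sub_self, zero_div]

/-- For a billiard `n`-gon in a smooth convex curve with support function `h`,
one has `∑ h'(ψᵢ) sin δᵢ = 0`. -/
theorem stmt_3 (h : ℝ → ℝ) (hd : Differentiable ℝ h)
    (n : ℕ) (hn : 2 ≤ n)
    (φ ψ δ : ℕ → ℝ)
    (hφ : φ n = φ 0 + 2 * Real.pi)
    (hψ : ∀ i ∈ Finset.Icc 1 n, ψ i = (φ (i - 1) + φ i) / 2)
    (hδ : ∀ i ∈ Finset.Icc 1 n, δ i = (φ i - φ (i - 1)) / 2)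
    (M : ℕ → EuclideanSpace ℝ (Fin 2))
    (hM : ∀ i ∈ Finset.Icc 1 n, M i
        = h (ψ i) • (WithLp.toLp 2 ![Real.cos (ψ i), Real.sin (ψ i)] : EuclideanSpace ℝ (Fin 2))
        + deriv h (ψ i) • (WithLp.toLp 2 ![-Real.sin (ψ i), Real.cos (ψ i)] : EuclideanSpace ℝ (Fin 2)))
    (hMwrap : M (n + 1) = M 1)
    (chord : ∀ i ∈ Finset.Icc 1 n, ∃ t : ℝ, 0 < t ∧
        M (i + 1) - M i = t • (WithLp.toLp 2 ![-Real.sin (φ i), Real.cos (φ i)] : EuclideanSpace ℝ (Fin 2))) :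
    ∑ i ∈ Finset.Icc 1 n, deriv h (ψ i) * Real.sin (δ i) = 0 :=
  stmt_3_general h n φ ψ δ hφ hψ hδ M hM hMwrap chord
end

section
/- Under the billiard polygon setup with h the support function of an ellipse and under the Joachimsthal hypothesis, one has 2·Σ_{i=1}^{n} sin²δᵢ = J·L. -/
/-!
The side `M (i + 1) - M i` is a nonnegative multiple of the unit vector `u φᵢ = (-sin φᵢ, cos φᵢ)`,
so its length is `⟪M (i + 1) - M i, u φᵢ⟫`. With `Aᵢ = ⟪M i, u φᵢ₋₁⟫` this length equals
`(Aᵢ₊₁ - Aᵢ) + ⟪M i, u φᵢ₋₁ - u φᵢ⟫`, and `u (ψ - δ) - u (ψ + δ) = 2 sin δ • (cos ψ, sin ψ)`,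
whose inner product with the support point `M i` is `2 h(ψᵢ) sin δᵢ`. Since `φₙ = φ₀ + 2π` and
`M (n + 1) = M 1`, the `A`-terms telescope to zero around the polygon, so
`L = 2 ∑ h(ψᵢ) sin δᵢ`, and the Joachimsthal relation turns `J h(ψᵢ) sin δᵢ` into `sin² δᵢ`.
-/

open Real Finset
open scoped InnerProductSpace

lemma norm_eq_inner_of_eq_smul {E : Type*} [NormedAddCommGroup E] [InnerProductSpace ℝ E]
    {u w : E} {t : ℝ} (hu : ‖u‖ = 1) (ht : 0 ≤ t) (hw : w = t • u) : ‖w‖ = ⟪w, u⟫_ℝ := by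
  rw [hw, norm_smul, real_inner_smul_left, real_inner_self_eq_norm_sq, hu, norm_of_nonneg ht]
  ring

lemma Finset.sum_Icc_sub_eq_zero {M : Type*} [AddCommGroup M] {m n : ℕ} (f : ℕ → M)
    (hf : f (n + 1) = f m) : ∑ i ∈ Icc m n, (f (i + 1) - f i) = 0 := by
  rcases le_or_gt m n with hmn | hnm
  · rw [sum_Icc_sub hmn, hf, sub_self]
  · rw [Icc_eq_empty_of_lt hnm, sum_empty]

namespace BilliardPolygon

noncomputable def radial (θ : ℝ) : EuclideanSpace ℝ (Fin 2) := WithLp.toLp 2 ![cos θ, sin θ]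

noncomputable def tangent (θ : ℝ) : EuclideanSpace ℝ (Fin 2) := WithLp.toLp 2 ![-sin θ, cos θ]

lemma norm_tangent (θ : ℝ) : ‖tangent θ‖ = 1 := by
  simp [EuclideanSpace.norm_eq, tangent, Fin.sum_univ_two]

lemma tangent_add_two_pi (θ : ℝ) : tangent (θ + 2 * π) = tangent θ := by
  simp [tangent]

lemma tangent_sub_sub_tangent_add (ψ δ : ℝ) :
    tangent (ψ - δ) - tangent (ψ + δ) = (2 * sin δ) • radial ψ := by
  ext i
  fin_cases i <;> simp [tangent, radial, sin_add, sin_sub, cos_add, cos_sub] <;> ring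

lemma inner_smul_radial_add_smul_tangent_radial (a b θ : ℝ) :
    ⟪a • radial θ + b • tangent θ, radial θ⟫_ℝ = a := by
  simp only [radial, tangent, PiLp.inner_apply, PiLp.add_apply, PiLp.smul_apply, smul_eq_mul,
    RCLike.inner_apply, conj_trivial, Fin.sum_univ_two, Matrix.cons_val_zero, mul_neg,
    Matrix.cons_val_one, Matrix.cons_val_fin_one]
  linear_combination a * sin_sq_add_cos_sq θ

theorem perimeter_eq_two_mul_sum {n : ℕ} {φ : ℕ → ℝ} (hφ : φ n = φ 0 + 2 * π)
    {M : ℕ → EuclideanSpace ℝ (Fin 2)} (hM : M (n + 1) = M 1)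
    (chord : ∀ i ∈ Icc 1 n, ∃ t : ℝ, 0 ≤ t ∧ M (i + 1) - M i = t • tangent (φ i)) :
    ∑ i ∈ Icc 1 n, ‖M (i + 1) - M i‖ = 2 * ∑ i ∈ Icc 1 n,
      sin ((φ i - φ (i - 1)) / 2) * ⟪M i, radial ((φ (i - 1) + φ i) / 2)⟫_ℝ := by
  set A : ℕ → ℝ := fun i ↦ ⟪M i, tangent (φ (i - 1))⟫_ℝ
  have hA : A (n + 1) = A 1 := by simp [A, hM, hφ, tangent_add_two_pi]
  have side : ∀ i ∈ Icc 1 n, ‖M (i + 1) - M i‖ = (A (i + 1) - A i) +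
      2 * (sin ((φ i - φ (i - 1)) / 2) * ⟪M i, radial ((φ (i - 1) + φ i) / 2)⟫_ℝ) := by
    intro i hi
    obtain ⟨t, ht, hMt⟩ := chord i hi
    have hdiff : tangent (φ (i - 1)) - tangent (φ i)
        = (2 * sin ((φ i - φ (i - 1)) / 2)) • radial ((φ (i - 1) + φ i) / 2) := by
      rw [← tangent_sub_sub_tangent_add]
      ring_nf
    rw [norm_eq_inner_of_eq_smul (norm_tangent _) ht hMt, inner_sub_left]
    calc ⟪M (i + 1), tangent (φ i)⟫_ℝ - ⟪M i, tangent (φ i)⟫_ℝ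
        = (A (i + 1) - A i) + ⟪M i, tangent (φ (i - 1)) - tangent (φ i)⟫_ℝ := by
          simp only [A, inner_sub_right, Nat.add_sub_cancel]
          ring
      _ = _ := by rw [hdiff, real_inner_smul_right]; ring
  rw [sum_congr rfl side, sum_add_distrib, sum_Icc_sub_eq_zero A hA, zero_add, mul_sum]

end BilliardPolygon

open BilliardPolygon

theorem stmt_4_general
    (h : ℝ → ℝ)
    (n : ℕ)
    (φ ψ δ : ℕ → ℝ)
    (hφ : φ n = φ 0 + 2 * Real.pi)
    (hψ : ∀ i ∈ Finset.Icc 1 n, ψ i = (φ (i - 1) + φ i) / 2)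
    (hδ : ∀ i ∈ Finset.Icc 1 n, δ i = (φ i - φ (i - 1)) / 2)
    (M : ℕ → EuclideanSpace ℝ (Fin 2))
    (hM : ∀ i ∈ Finset.Icc 1 n, M i
        = h (ψ i) • (WithLp.toLp 2 ![Real.cos (ψ i), Real.sin (ψ i)] : EuclideanSpace ℝ (Fin 2))
        + deriv h (ψ i) • (WithLp.toLp 2 ![-Real.sin (ψ i), Real.cos (ψ i)] : EuclideanSpace ℝ (Fin 2)))
    (hMwrap : M (n + 1) = M 1)
    (chord : ∀ i ∈ Finset.Icc 1 n, ∃ t : ℝ, 0 < t ∧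
        M (i + 1) - M i = t • (WithLp.toLp 2 ![-Real.sin (φ i), Real.cos (φ i)] : EuclideanSpace ℝ (Fin 2)))
    (J : ℝ)
    (hJoach : ∀ i ∈ Finset.Icc 1 n, Real.sin (δ i) = J * h (ψ i))
    (L : ℝ) (hL : L = ∑ i ∈ Finset.Icc 1 n, ‖M (i + 1) - M i‖)
    : 2 * ∑ i ∈ Finset.Icc 1 n, Real.sin (δ i) ^ 2 = J * L := by
  have chord' : ∀ i ∈ Icc 1 n, ∃ t : ℝ, 0 ≤ t ∧ M (i + 1) - M i = t • tangent (φ i) := by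
    intro i hi
    obtain ⟨t, ht, hMt⟩ := chord i hi
    exact ⟨t, ht.le, hMt⟩
  have support : ∀ i ∈ Icc 1 n, ⟪M i, radial (ψ i)⟫_ℝ = h (ψ i) := by
    intro i hi
    rw [hM i hi]
    exact inner_smul_radial_add_smul_tangent_radial _ _ _
  rw [hL, perimeter_eq_two_mul_sum hφ hMwrap chord', mul_left_comm]
  congr 1
  rw [mul_sum]
  refine sum_congr rfl fun i hi ↦ ?_
  rw [← hδ i hi, ← hψ i hi, support i hi, sq, hJoach i hi]
  ring

/-- Corollary: `2 ∑ sin² δᵢ = J · L` for a billiard n-gon in an ellipse. -/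
theorem stmt_4
    (a₁ a₂ : ℝ) (ha₁ : 0 < a₁) (ha₂ : 0 < a₂)
    (h : ℝ → ℝ)
    (hh : ∀ x : ℝ, h x = Real.sqrt (a₁ ^ 2 * Real.cos x ^ 2 + a₂ ^ 2 * Real.sin x ^ 2))
    (n : ℕ) (hn : 2 ≤ n)
    (φ ψ δ : ℕ → ℝ)
    (hφ : φ n = φ 0 + 2 * Real.pi)
    (hψ : ∀ i ∈ Finset.Icc 1 n, ψ i = (φ (i - 1) + φ i) / 2)
    (hδ : ∀ i ∈ Finset.Icc 1 n, δ i = (φ i - φ (i - 1)) / 2)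
    (M : ℕ → EuclideanSpace ℝ (Fin 2))
    (hM : ∀ i ∈ Finset.Icc 1 n, M i
        = h (ψ i) • (WithLp.toLp 2 ![Real.cos (ψ i), Real.sin (ψ i)] : EuclideanSpace ℝ (Fin 2))
        + deriv h (ψ i) • (WithLp.toLp 2 ![-Real.sin (ψ i), Real.cos (ψ i)] : EuclideanSpace ℝ (Fin 2)))
    (hMwrap : M (n + 1) = M 1)
    (chord : ∀ i ∈ Finset.Icc 1 n, ∃ t : ℝ, 0 < t ∧
        M (i + 1) - M i = t • (WithLp.toLp 2 ![-Real.sin (φ i), Real.cos (φ i)] : EuclideanSpace ℝ (Fin 2)))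
    (J : ℝ) (hJ : 0 < J)
    (hJoach : ∀ i ∈ Finset.Icc 1 n, Real.sin (δ i) = J * h (ψ i))
    (L : ℝ) (hL : L = ∑ i ∈ Finset.Icc 1 n, ‖M (i + 1) - M i‖)
    : 2 * ∑ i ∈ Finset.Icc 1 n, Real.sin (δ i) ^ 2 = J * L :=
  stmt_4_general h n φ ψ δ hφ hψ hδ M hM hMwrap chord J hJoach L hL
end

section
/- Under the family setup, for all t ∈ ℝ and all indices i, j ∈ {1, …, n}: ψᵢ'(t)·sin(2δ(ψⱼ(t))) = ψⱼ'(t)·sin(2δ(ψᵢ(t))). -/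
open Real

/-- In a 1-parameter family of billiard `n`-gons in an ellipse,
`ψᵢ′(t) · sin(2δ(ψⱼ(t))) = ψⱼ′(t) · sin(2δ(ψᵢ(t)))` for all indices `i, j`. -/
theorem stmt_9
    (a₁ a₂ : ℝ) (ha₂ : 0 < a₂) (ha : a₂ < a₁)
    (h : ℝ → ℝ)
    (hh : ∀ x : ℝ, h x = Real.sqrt (a₁ ^ 2 * Real.cos x ^ 2 + a₂ ^ 2 * Real.sin x ^ 2))
    (J : ℝ) (hJ : 0 < J) (hJa : J * a₁ < 1)
    (δ : ℝ → ℝ) (hδ : ∀ x : ℝ, δ x = Real.arcsin (J * h x))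
    (n : ℕ) (hn : 3 ≤ n)
    (ψ : ℕ → ℝ → ℝ)
    (hdiff : ∀ i ∈ Finset.Icc 1 n, Differentiable ℝ (ψ i))
    (hwrap : ∀ t : ℝ, ψ (n + 1) t = ψ 1 t + 2 * Real.pi)
    (hrel : ∀ t : ℝ, ∀ i ∈ Finset.Icc 1 n,
        ψ (i + 1) t - ψ i t = δ (ψ i t) + δ (ψ (i + 1) t))
    (hgen : ∀ t : ℝ, ∀ i ∈ Finset.Icc 1 n,
        h (ψ i t) * Real.cos (δ (ψ i t)) + deriv h (ψ i t) * Real.sin (δ (ψ i t))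
          = h (ψ (i + 1) t) * Real.cos (δ (ψ (i + 1) t))
            - deriv h (ψ (i + 1) t) * Real.sin (δ (ψ (i + 1) t)))
    (hreg : ∀ t : ℝ, ∀ i ∈ Finset.Icc 1 n,
        Real.sin (2 * δ (ψ i t)) ≠ 0 ∧ deriv δ (ψ i t) ≠ 1)
    (t : ℝ) (i j : ℕ) (hi : i ∈ Finset.Icc 1 n) (hj : j ∈ Finset.Icc 1 n) :
    deriv (ψ i) t * Real.sin (2 * δ (ψ j t))
      = deriv (ψ j) t * Real.sin (2 * δ (ψ i t)) := by
  have ha₁ : 0 < a₁ := lt_trans ha₂ ha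
  -- bounds on h
  have hgpos : ∀ x : ℝ, 0 < a₁ ^ 2 * Real.cos x ^ 2 + a₂ ^ 2 * Real.sin x ^ 2 := by
    intro x
    have key : a₁ ^ 2 * Real.cos x ^ 2 + a₂ ^ 2 * Real.sin x ^ 2
        = a₂ ^ 2 + (a₁ ^ 2 - a₂ ^ 2) * Real.cos x ^ 2 := by
      linear_combination a₂ ^ 2 * (Real.sin_sq_add_cos_sq x)
    rw [key]
    nlinarith [mul_nonneg (by nlinarith : (0:ℝ) ≤ a₁ ^ 2 - a₂ ^ 2) (sq_nonneg (Real.cos x)),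
      mul_pos ha₂ ha₂]
  have hhpos : ∀ x : ℝ, 0 < h x := by
    intro x; rw [hh]; exact Real.sqrt_pos.mpr (hgpos x)
  have hhle : ∀ x : ℝ, h x ≤ a₁ := by
    intro x
    rw [hh]
    have h1 : a₁ ^ 2 * Real.cos x ^ 2 + a₂ ^ 2 * Real.sin x ^ 2 ≤ a₁ ^ 2 := by
      have key : a₁ ^ 2 - (a₁ ^ 2 * Real.cos x ^ 2 + a₂ ^ 2 * Real.sin x ^ 2)
          = (a₁ ^ 2 - a₂ ^ 2) * Real.sin x ^ 2 := by
        linear_combination (-a₁ ^ 2) * (Real.sin_sq_add_cos_sq x)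
      nlinarith [mul_nonneg (by nlinarith : (0:ℝ) ≤ a₁ ^ 2 - a₂ ^ 2) (sq_nonneg (Real.sin x))]
    calc Real.sqrt (a₁ ^ 2 * Real.cos x ^ 2 + a₂ ^ 2 * Real.sin x ^ 2)
        ≤ Real.sqrt (a₁ ^ 2) := Real.sqrt_le_sqrt h1
      _ = a₁ := by rw [Real.sqrt_sq ha₁.le]
  have hJh0 : ∀ x : ℝ, 0 < J * h x := fun x => mul_pos hJ (hhpos x)
  have hJh1 : ∀ x : ℝ, J * h x < 1 := by
    intro x
    calc J * h x ≤ J * a₁ := by nlinarith [hhle x]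
      _ < 1 := hJa
  have hsinδ : ∀ x : ℝ, Real.sin (δ x) = J * h x := by
    intro x
    rw [hδ, Real.sin_arcsin (by linarith [hJh0 x]) (hJh1 x).le]
  have hcosδ : ∀ x : ℝ, 0 < Real.cos (δ x) := by
    intro x
    rw [hδ, Real.cos_arcsin]
    exact Real.sqrt_pos.mpr (by nlinarith [hJh0 x, hJh1 x])
  -- differentiability of h
  have hdh : ∀ x : ℝ, DifferentiableAt ℝ h x := by
    intro x
    have hfun : h = fun y => Real.sqrt (a₁ ^ 2 * Real.cos y ^ 2 + a₂ ^ 2 * Real.sin y ^ 2) :=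
      funext hh
    rw [hfun]
    exact DifferentiableAt.sqrt (by fun_prop) (ne_of_gt (hgpos x))
  -- derivative of δ
  have hδd : ∀ x : ℝ, HasDerivAt δ (J * deriv h x / Real.cos (δ x)) x := by
    intro x
    have h1 : HasDerivAt (fun y => J * h y) (J * deriv h x) x := ((hdh x).hasDerivAt).const_mul J
    have h2 : HasDerivAt Real.arcsin (1 / Real.sqrt (1 - (J * h x) ^ 2)) (J * h x) :=
      Real.hasDerivAt_arcsin (by nlinarith [hJh0 x]) (ne_of_lt (hJh1 x))
    have h3 := h2.comp x h1
    have hfun : δ = Real.arcsin ∘ (fun y => J * h y) := funext fun y => hδ y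
    have hval : J * deriv h x / Real.cos (δ x)
        = 1 / Real.sqrt (1 - (J * h x) ^ 2) * (J * deriv h x) := by
      rw [hδ x, Real.cos_arcsin]
      ring
    rw [hval, hfun]
    exact h3
  -- step lemma
  have step : ∀ k : ℕ, 1 ≤ k → k + 1 ≤ n →
      deriv (ψ k) t * Real.sin (2 * δ (ψ (k + 1) t))
        = deriv (ψ (k + 1)) t * Real.sin (2 * δ (ψ k t)) := by
    intro k hk1 hk1n
    have hk : k ∈ Finset.Icc 1 n := by simp [Finset.mem_Icc]; omega
    have hk' : k + 1 ∈ Finset.Icc 1 n := by simp [Finset.mem_Icc]; omega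
    set u := deriv (ψ k) t with hu_def
    set v := deriv (ψ (k + 1)) t with hv_def
    set x := ψ k t with hx_def
    set y := ψ (k + 1) t with hy_def
    set D₁ := J * deriv h x / Real.cos (δ x) with hD1_def
    set D₂ := J * deriv h y / Real.cos (δ y) with hD2_def
    have hu : HasDerivAt (ψ k) u t := (hdiff k hk t).hasDerivAt
    have hv : HasDerivAt (ψ (k + 1)) v t := (hdiff (k + 1) hk' t).hasDerivAt
    have hL : HasDerivAt (fun s => ψ (k + 1) s - ψ k s) (v - u) t := hv.sub hu
    have hR : HasDerivAt (fun s => δ (ψ k s) + δ (ψ (k + 1) s)) (D₁ * u + D₂ * v) t := by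
      exact ((hδd x).comp t hu).add ((hδd y).comp t hv)
    have hLR : HasDerivAt (fun s => ψ (k + 1) s - ψ k s) (D₁ * u + D₂ * v) t :=
      hR.congr_of_eventuallyEq (Filter.Eventually.of_forall fun s => (hrel s k hk))
    have E1 : v - u = D₁ * u + D₂ * v := hL.unique hLR
    -- deriv δ values & regularity
    have hD2ne : D₂ ≠ 1 := by
      have := (hreg t (k + 1) hk').2
      rwa [(hδd y).deriv] at this
    have hc1 : Real.cos (δ x) ≠ 0 := ne_of_gt (hcosδ x)
    have hc2 : Real.cos (δ y) ≠ 0 := ne_of_gt (hcosδ y)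
    have hJd1 : J * deriv h x = Real.cos (δ x) * D₁ := by
      rw [hD1_def]; field_simp
    have hJd2 : J * deriv h y = Real.cos (δ y) * D₂ := by
      rw [hD2_def]; field_simp
    -- transformed generating relation
    have E2 : h x * Real.cos (δ x) * (1 + D₁) = h y * Real.cos (δ y) * (1 - D₂) := by
      have hg := hgen t k hk
      rw [← hx_def, ← hy_def, hsinδ x, hsinδ y] at hg
      nlinarith [hg, hJd1, hJd2, hhpos x, hhpos y]
    have E1' : u * (1 + D₁) = v * (1 - D₂) := by linarith
    have E3 : (1 : ℝ) - D₂ ≠ 0 := sub_ne_zero.mpr (Ne.symm hD2ne)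
    have key : u * (h y * Real.cos (δ y)) = v * (h x * Real.cos (δ x)) := by
      apply mul_right_cancel₀ E3
      calc u * (h y * Real.cos (δ y)) * (1 - D₂)
          = u * (h y * Real.cos (δ y) * (1 - D₂)) := by ring
        _ = u * (h x * Real.cos (δ x) * (1 + D₁)) := by rw [← E2]
        _ = (u * (1 + D₁)) * (h x * Real.cos (δ x)) := by ring
        _ = (v * (1 - D₂)) * (h x * Real.cos (δ x)) := by rw [E1']
        _ = v * (h x * Real.cos (δ x)) * (1 - D₂) := by ring
    rw [Real.sin_two_mul, Real.sin_two_mul, hsinδ x, hsinδ y]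
    linear_combination 2 * J * key
  -- S k ≠ 0 abbreviation
  have Sne : ∀ k : ℕ, k ∈ Finset.Icc 1 n → Real.sin (2 * δ (ψ k t)) ≠ 0 :=
    fun k hk => (hreg t k hk).1
  -- chain from 1 to k
  have chain : ∀ k : ℕ, 1 ≤ k → k ≤ n →
      deriv (ψ 1) t * Real.sin (2 * δ (ψ k t))
        = deriv (ψ k) t * Real.sin (2 * δ (ψ 1 t)) := by
    intro k
    induction k with
    | zero => intro h1; omega
    | succ m ih =>
      intro h1 h2
      rcases Nat.lt_or_ge 1 (m + 1) with hlt | hle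
      · have hm1 : 1 ≤ m := by omega
        have hmn : m ≤ n := by omega
        have hm : m ∈ Finset.Icc 1 n := by simp [Finset.mem_Icc]; omega
        have ihm := ih hm1 hmn
        have st := step m hm1 (by omega)
        apply mul_right_cancel₀ (Sne m hm)
        calc deriv (ψ 1) t * Real.sin (2 * δ (ψ (m + 1) t)) * Real.sin (2 * δ (ψ m t))
            = (deriv (ψ 1) t * Real.sin (2 * δ (ψ m t))) * Real.sin (2 * δ (ψ (m + 1) t)) := by
              ring
          _ = (deriv (ψ m) t * Real.sin (2 * δ (ψ 1 t))) * Real.sin (2 * δ (ψ (m + 1) t)) := by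
              rw [ihm]
          _ = (deriv (ψ m) t * Real.sin (2 * δ (ψ (m + 1) t))) * Real.sin (2 * δ (ψ 1 t)) := by
              ring
          _ = (deriv (ψ (m + 1)) t * Real.sin (2 * δ (ψ m t))) * Real.sin (2 * δ (ψ 1 t)) := by
              rw [st]
          _ = deriv (ψ (m + 1)) t * Real.sin (2 * δ (ψ 1 t)) * Real.sin (2 * δ (ψ m t)) := by
              ring
      · have hm0 : m = 0 := by omega
        subst hm0; ring
  -- finish
  simp only [Finset.mem_Icc] at hi hj
  have h1 : (1 : ℕ) ∈ Finset.Icc 1 n := by simp [Finset.mem_Icc]; omega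
  have ci := chain i hi.1 hi.2
  have cj := chain j hj.1 hj.2
  apply mul_right_cancel₀ (Sne 1 h1)
  calc deriv (ψ i) t * Real.sin (2 * δ (ψ j t)) * Real.sin (2 * δ (ψ 1 t))
      = (deriv (ψ i) t * Real.sin (2 * δ (ψ 1 t))) * Real.sin (2 * δ (ψ j t)) := by ring
    _ = (deriv (ψ 1) t * Real.sin (2 * δ (ψ i t))) * Real.sin (2 * δ (ψ j t)) := by rw [← ci]
    _ = (deriv (ψ 1) t * Real.sin (2 * δ (ψ j t))) * Real.sin (2 * δ (ψ i t)) := by ring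
    _ = (deriv (ψ j) t * Real.sin (2 * δ (ψ 1 t))) * Real.sin (2 * δ (ψ i t)) := by rw [cj]
    _ = deriv (ψ j) t * Real.sin (2 * δ (ψ i t)) * Real.sin (2 * δ (ψ 1 t)) := by ring
end

section
/- Under the family setup, the product of the cosines of the angles of the circumscribed tangent polygon is constant along the family: the function t ↦ ∏_{i=1}^{n} cos(π − δ(ψᵢ(t)) − δ(ψ_{i+1}(t))) is constant on ℝ. (Here βᵢ = π − δ(ψᵢ) − δ(ψ_{i+1}) is the angle of the polygon formed by the tangent lines to the ellipse at the impact points.) -/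
/-!
Write `βᵢ = π - δᵢ - δᵢ₊₁` with `δᵢ = δ(ψᵢ)`. Differentiating the relation (i) and using
`sin δ = J h`, `cos δ · δ' = J h'` in (ii), one gets `sin 2δᵢ · ψ'ᵢ₊₁ = sin 2δᵢ₊₁ · ψ'ᵢ` after
dividing by `1 - δ'(ψᵢ₊₁)`. With it the logarithmic derivative of `cos βᵢ` is `Bᵢ - Bᵢ₊₁`, where
`Bᵢ = tan δᵢ · ψ'ᵢ`, so the logarithmic derivative of the product telescopes to `B₁ - Bₙ₊₁`, which
vanishes because `ψₙ₊₁ = ψ₁ + 2π` and `δ` is `2π`-periodic.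
-/

open Real Function Finset

theorem Function.Periodic.deriv {𝕜 F : Type*} [NontriviallyNormedField 𝕜] [NormedAddCommGroup F]
    [NormedSpace 𝕜 F] {f : 𝕜 → F} {c : 𝕜} (hf : Periodic f c) : Periodic (deriv f) c := fun x => by
  rw [← deriv_comp_add_const, hf.funext]

theorem HasDerivAt.finsetProd_of_logDeriv {ι 𝕜 𝔸 : Type*} [NontriviallyNormedField 𝕜]
    [NormedCommRing 𝔸] [NormedAlgebra 𝕜 𝔸] {u : Finset ι} {f : ι → 𝕜 → 𝔸} {g : ι → 𝔸} {x : 𝕜}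
    (hf : ∀ i ∈ u, HasDerivAt (f i) (f i x * g i) x) :
    HasDerivAt (fun y => ∏ i ∈ u, f i y) ((∏ i ∈ u, f i x) * ∑ i ∈ u, g i) x := by
  classical
  convert HasDerivAt.fun_finsetProd hf using 1
  rw [mul_sum]
  refine sum_congr rfl fun i hi => ?_
  rw [← mul_prod_erase u (f · x) hi, smul_eq_mul]
  ring

theorem HasDerivAt.arcsin {f : ℝ → ℝ} {f' x : ℝ} (hf : HasDerivAt f f' x) (h₁ : f x ≠ -1)
    (h₂ : f x ≠ 1) :
    HasDerivAt (fun y => Real.arcsin (f y)) (f' / Real.cos (Real.arcsin (f x))) x := by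
  have := (hasDerivAt_arcsin h₁ h₂).comp x hf
  rwa [cos_arcsin, div_eq_inv_mul, ← one_div]

theorem Real.cos_arcsin_pos {x : ℝ} (h₁ : -1 < x) (h₂ : x < 1) : 0 < cos (arcsin x) := by
  rw [cos_arcsin]
  exact sqrt_pos.2 (by nlinarith)

theorem Finset.forall_mem_Icc_succ {P : ℕ → Prop} {n : ℕ} (h : ∀ i ∈ Icc 1 n, P i)
    (hwrap : P 1 → P (n + 1)) : ∀ i ∈ Icc 1 n, P (i + 1) := by
  intro i hi
  rw [mem_Icc] at hi
  rcases hi.2.lt_or_eq with hlt | rfl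
  · exact h (i + 1) (mem_Icc.2 ⟨by omega, hlt⟩)
  · exact hwrap (h 1 (mem_Icc.2 ⟨le_rfl, hi.1⟩))

theorem Finset.sum_Icc_one_sub_succ {M : Type*} [AddCommGroup M] (f : ℕ → M) (n : ℕ) :
    ∑ i ∈ Icc 1 n, (f i - f (i + 1)) = f 1 - f (n + 1) := by
  rw [← Ico_add_one_right_eq_Icc, ← neg_sub, ← sum_Ico_sub f (by omega : 1 ≤ n + 1),
    ← sum_neg_distrib]
  simp only [neg_sub]

noncomputable def ellipseSupport (a₁ a₂ x : ℝ) : ℝ :=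
  √(a₁ ^ 2 * cos x ^ 2 + a₂ ^ 2 * sin x ^ 2)

section ellipseSupport

variable {a₁ a₂ : ℝ}

theorem ellipseSupport_periodic : Periodic (ellipseSupport a₁ a₂) (2 * π) := fun x => by
  simp only [ellipseSupport, cos_add_two_pi, sin_add_two_pi]

theorem sq_le_ellipseSupport_radicand (x : ℝ) (ha : a₂ ^ 2 ≤ a₁ ^ 2) :
    a₂ ^ 2 ≤ a₁ ^ 2 * cos x ^ 2 + a₂ ^ 2 * sin x ^ 2 := by
  nlinarith [sin_sq_add_cos_sq x, mul_nonneg (sub_nonneg.2 ha) (sq_nonneg (cos x))]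

theorem ellipseSupport_mem_Icc (x : ℝ) (ha₂ : 0 ≤ a₂) (ha : a₂ ≤ a₁) :
    ellipseSupport a₁ a₂ x ∈ Set.Icc a₂ a₁ := by
  have hsq : a₂ ^ 2 ≤ a₁ ^ 2 := by gcongr
  constructor
  · exact le_sqrt_of_sq_le (sq_le_ellipseSupport_radicand x hsq)
  · refine sqrt_le_iff.2 ⟨ha₂.trans ha, ?_⟩
    nlinarith [sin_sq_add_cos_sq x, mul_nonneg (sub_nonneg.2 hsq) (sq_nonneg (sin x))]

theorem differentiable_ellipseSupport (ha₂ : 0 < a₂) (ha : a₂ ≤ a₁) :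
    Differentiable ℝ (ellipseSupport a₁ a₂) := fun x => by
  have hsq : a₂ ^ 2 ≤ a₁ ^ 2 := by gcongr
  have hpos := (pow_pos ha₂ 2).trans_le (sq_le_ellipseSupport_radicand x hsq)
  exact DifferentiableAt.sqrt (by fun_prop) hpos.ne'

end ellipseSupport

theorem sin_add_mul_sub_eq {a b u v : ℝ} (ha : cos a ≠ 0) (hb : cos b ≠ 0)
    (h : sin (2 * a) * v = sin (2 * b) * u) :
    sin (a + b) * (v - u) = cos (a + b) * (tan b * v - tan a * u) := by
  rw [sin_two_mul, sin_two_mul] at h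
  rw [sin_add, cos_add, tan_eq_sin_div_cos, tan_eq_sin_div_cos]
  field_simp
  linear_combination (sin a * cos a * v) * sin_sq_add_cos_sq b
    - (sin b * cos b * u) * sin_sq_add_cos_sq a + (1 / 2 : ℝ) * h

theorem sin_two_mul_mul_one_add_deriv_eq {h δ : ℝ → ℝ} {J x y : ℝ}
    (hsin : ∀ z, sin (δ z) = J * h z) (hchain : ∀ z, cos (δ z) * deriv δ z = J * deriv h z)
    (hxy : h x * cos (δ x) + deriv h x * sin (δ x) = h y * cos (δ y) - deriv h y * sin (δ y)) :
    sin (2 * δ x) * (1 + deriv δ x) = sin (2 * δ y) * (1 - deriv δ y) := by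
  rw [sin_two_mul, sin_two_mul]
  linear_combination 2 * J * hxy + 2 * cos (δ x) * hsin x + 2 * sin (δ x) * hchain x
    - 2 * cos (δ y) * hsin y + 2 * sin (δ y) * hchain y

section BilliardFamily

variable {δ : ℝ → ℝ}

theorem hasDerivAt_cos_pi_sub_sub {p q : ℝ → ℝ} {u v τ : ℝ}
    (hp : HasDerivAt p u τ) (hq : HasDerivAt q v τ) (hδ : Differentiable ℝ δ)
    (hrel : ∀ σ, q σ - p σ = δ (p σ) + δ (q σ))
    (hrefl : sin (2 * δ (p τ)) * (1 + deriv δ (p τ)) = sin (2 * δ (q τ)) * (1 - deriv δ (q τ)))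
    (hq1 : deriv δ (q τ) ≠ 1) (hcp : cos (δ (p τ)) ≠ 0) (hcq : cos (δ (q τ)) ≠ 0) :
    HasDerivAt (fun σ => cos (π - δ (p σ) - δ (q σ)))
      (cos (π - δ (p τ) - δ (q τ)) * (tan (δ (p τ)) * u - tan (δ (q τ)) * v)) τ := by
  have hδp := (hδ (p τ)).hasDerivAt.comp τ hp
  have hδq := (hδ (q τ)).hasDerivAt.comp τ hq
  have hrate : v - u = deriv δ (p τ) * u + deriv δ (q τ) * v := by
    refine (hq.sub hp).unique ?_
    simp_rw [Pi.sub_def, hrel]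
    exact hδp.add hδq
  have hkey : sin (2 * δ (p τ)) * v = sin (2 * δ (q τ)) * u := by
    refine mul_left_cancel₀ (sub_ne_zero.2 hq1.symm) ?_
    linear_combination sin (2 * δ (p τ)) * hrate + u * hrefl
  refine ((hδp.const_sub π).sub hδq).cos.congr_deriv ?_
  simp only [Pi.sub_apply, comp_apply]
  rw [sub_sub, cos_pi_sub, sin_pi_sub]
  linear_combination (-sin (δ (p τ) + δ (q τ))) * hrate
    + sin_add_mul_sub_eq hcp hcq hkey

theorem prod_cos_tangent_angles_eq {n : ℕ} {ψ : ℕ → ℝ → ℝ}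
    (hδ : Differentiable ℝ δ) (hδper : Periodic δ (2 * π)) (hcos : ∀ x, cos (δ x) ≠ 0)
    (hψ : ∀ i ∈ Icc 1 n, Differentiable ℝ (ψ i))
    (hwrap : ∀ t, ψ (n + 1) t = ψ 1 t + 2 * π)
    (hrel : ∀ t, ∀ i ∈ Icc 1 n, ψ (i + 1) t - ψ i t = δ (ψ i t) + δ (ψ (i + 1) t))
    (hrefl : ∀ t, ∀ i ∈ Icc 1 n, sin (2 * δ (ψ i t)) * (1 + deriv δ (ψ i t))
      = sin (2 * δ (ψ (i + 1) t)) * (1 - deriv δ (ψ (i + 1) t)))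
    (hreg : ∀ t, ∀ i ∈ Icc 1 n, deriv δ (ψ i t) ≠ 1) (t s : ℝ) :
    ∏ i ∈ Icc 1 n, cos (π - δ (ψ i t) - δ (ψ (i + 1) t))
      = ∏ i ∈ Icc 1 n, cos (π - δ (ψ i s) - δ (ψ (i + 1) s)) := by
  have hψwrap : ψ (n + 1) = fun t => ψ 1 t + 2 * π := funext hwrap
  have hψsucc := forall_mem_Icc_succ hψ fun h1 => hψwrap ▸ h1.add_const _
  have hregsucc := forall_mem_Icc_succ (P := fun i => ∀ t, deriv δ (ψ i t) ≠ 1)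
    (fun i hi t => hreg t i hi) fun h1 t => by rw [hwrap, hδper.deriv]; exact h1 t
  have hderiv (τ : ℝ) :
      HasDerivAt (fun σ => ∏ i ∈ Icc 1 n, cos (π - δ (ψ i σ) - δ (ψ (i + 1) σ))) 0 τ := by
    have := HasDerivAt.finsetProd_of_logDeriv fun i hi =>
      hasDerivAt_cos_pi_sub_sub (hψ i hi τ).hasDerivAt (hψsucc i hi τ).hasDerivAt hδ
        (fun σ => hrel σ i hi) (hrefl τ i hi) (hregsucc i hi τ) (hcos _) (hcos _)
    rwa [sum_Icc_one_sub_succ (fun j => tan (δ (ψ j τ)) * deriv (ψ j) τ), hψwrap,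
      deriv_add_const, hδper, sub_self, mul_zero] at this
  exact is_const_of_deriv_eq_zero (fun τ => (hderiv τ).differentiableAt)
    (fun τ => (hderiv τ).deriv) t s

end BilliardFamily

theorem mul_ellipseSupport_mem_Ico {a₁ a₂ J : ℝ} (x : ℝ) (ha₂ : 0 ≤ a₂) (ha : a₂ ≤ a₁)
    (hJ : 0 ≤ J) (hJa : J * a₁ < 1) : J * ellipseSupport a₁ a₂ x ∈ Set.Ico 0 1 := by
  obtain ⟨hlo, hhi⟩ := ellipseSupport_mem_Icc x ha₂ ha
  exact ⟨mul_nonneg hJ (ha₂.trans hlo), (mul_le_mul_of_nonneg_left hhi hJ).trans_lt hJa⟩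

theorem stmt_10_general
    (a₁ a₂ : ℝ) (ha₂ : 0 < a₂) (ha : a₂ < a₁)
    (h : ℝ → ℝ)
    (hh : ∀ x : ℝ, h x = Real.sqrt (a₁ ^ 2 * Real.cos x ^ 2 + a₂ ^ 2 * Real.sin x ^ 2))
    (J : ℝ) (hJ : 0 < J) (hJa : J * a₁ < 1)
    (δ : ℝ → ℝ) (hδ : ∀ x : ℝ, δ x = Real.arcsin (J * h x))
    (n : ℕ)
    (ψ : ℕ → ℝ → ℝ)
    (hdiff : ∀ i ∈ Finset.Icc 1 n, Differentiable ℝ (ψ i))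
    (hwrap : ∀ t : ℝ, ψ (n + 1) t = ψ 1 t + 2 * Real.pi)
    (hrel : ∀ t : ℝ, ∀ i ∈ Finset.Icc 1 n,
        ψ (i + 1) t - ψ i t = δ (ψ i t) + δ (ψ (i + 1) t))
    (hgen : ∀ t : ℝ, ∀ i ∈ Finset.Icc 1 n,
        h (ψ i t) * Real.cos (δ (ψ i t)) + deriv h (ψ i t) * Real.sin (δ (ψ i t))
          = h (ψ (i + 1) t) * Real.cos (δ (ψ (i + 1) t))
            - deriv h (ψ (i + 1) t) * Real.sin (δ (ψ (i + 1) t)))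
    (hreg : ∀ t : ℝ, ∀ i ∈ Finset.Icc 1 n,
        Real.sin (2 * δ (ψ i t)) ≠ 0 ∧ deriv δ (ψ i t) ≠ 1)
    (t s : ℝ) :
    ∏ i ∈ Finset.Icc 1 n, Real.cos (Real.pi - δ (ψ i t) - δ (ψ (i + 1) t))
      = ∏ i ∈ Finset.Icc 1 n, Real.cos (Real.pi - δ (ψ i s) - δ (ψ (i + 1) s)) := by
  obtain rfl : h = ellipseSupport a₁ a₂ := funext hh
  have hJh (x : ℝ) := mul_ellipseSupport_mem_Ico x ha₂.le ha.le hJ.le hJa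
  have hsin (x : ℝ) : sin (δ x) = J * ellipseSupport a₁ a₂ x := by
    rw [hδ, sin_arcsin (by linarith [(hJh x).1]) (hJh x).2.le]
  have hcos (x : ℝ) : 0 < cos (δ x) := by
    rw [hδ]
    exact cos_arcsin_pos (by linarith [(hJh x).1]) (hJh x).2
  have hδd (x : ℝ) : HasDerivAt δ (J * deriv (ellipseSupport a₁ a₂) x / cos (δ x)) x := by
    rw [funext hδ]
    exact ((differentiable_ellipseSupport ha₂ ha.le x).hasDerivAt.const_mul J).arcsin
      (by linarith [(hJh x).1]) (hJh x).2.ne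
  have hchain (x : ℝ) : cos (δ x) * deriv δ x = J * deriv (ellipseSupport a₁ a₂) x := by
    rw [(hδd x).deriv]
    field_simp [(hcos x).ne']
  exact prod_cos_tangent_angles_eq (fun x => (hδd x).differentiableAt)
    (fun x => by rw [hδ, hδ, ellipseSupport_periodic x]) (fun x => (hcos x).ne') hdiff hwrap hrel
    (fun t i hi => sin_two_mul_mul_one_add_deriv_eq hsin hchain (hgen t i hi))
    (fun t i hi => (hreg t i hi).2) t s

/-- In a 1-parameter family of billiard `n`-gons in an ellipse, the product of the
cosines of the angles `βᵢ = π - δ(ψᵢ) - δ(ψᵢ₊₁)` of the circumscribed tangent polygon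
is constant along the family. -/
theorem stmt_10
    (a₁ a₂ : ℝ) (ha₂ : 0 < a₂) (ha : a₂ < a₁)
    (h : ℝ → ℝ)
    (hh : ∀ x : ℝ, h x = Real.sqrt (a₁ ^ 2 * Real.cos x ^ 2 + a₂ ^ 2 * Real.sin x ^ 2))
    (J : ℝ) (hJ : 0 < J) (hJa : J * a₁ < 1)
    (δ : ℝ → ℝ) (hδ : ∀ x : ℝ, δ x = Real.arcsin (J * h x))
    (n : ℕ) (hn : 3 ≤ n)
    (ψ : ℕ → ℝ → ℝ)
    (hdiff : ∀ i ∈ Finset.Icc 1 n, Differentiable ℝ (ψ i))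
    (hwrap : ∀ t : ℝ, ψ (n + 1) t = ψ 1 t + 2 * Real.pi)
    (hrel : ∀ t : ℝ, ∀ i ∈ Finset.Icc 1 n,
        ψ (i + 1) t - ψ i t = δ (ψ i t) + δ (ψ (i + 1) t))
    (hgen : ∀ t : ℝ, ∀ i ∈ Finset.Icc 1 n,
        h (ψ i t) * Real.cos (δ (ψ i t)) + deriv h (ψ i t) * Real.sin (δ (ψ i t))
          = h (ψ (i + 1) t) * Real.cos (δ (ψ (i + 1) t))
            - deriv h (ψ (i + 1) t) * Real.sin (δ (ψ (i + 1) t)))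
    (hreg : ∀ t : ℝ, ∀ i ∈ Finset.Icc 1 n,
        Real.sin (2 * δ (ψ i t)) ≠ 0 ∧ deriv δ (ψ i t) ≠ 1)
    (t s : ℝ) :
    ∏ i ∈ Finset.Icc 1 n, Real.cos (Real.pi - δ (ψ i t) - δ (ψ (i + 1) t))
      = ∏ i ∈ Finset.Icc 1 n, Real.cos (Real.pi - δ (ψ i s) - δ (ψ (i + 1) s)) :=
  stmt_10_general a₁ a₂ ha₂ ha h hh J hJ hJa δ hδ n ψ hdiff hwrap hrel hgen hreg t s
end

section
/- Under the billiard polygon setup with h the support function of an ellipse and under the Joachimsthal hypothesis, the feet of the perpendiculars dropped from the center of the ellipse to the tangent lines at the vertices have center of mass at the center: Σ_{i=1}^{n} h(ψᵢ)·(cos ψᵢ, sin ψᵢ) = (0, 0). -/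
/-!
By the sum-to-product formulas, `2 sin δᵢ · (cos ψᵢ, sin ψᵢ) = N(φᵢ) - N(φᵢ₋₁)` with
`N(θ) = (sin θ, -cos θ)`. The Joachimsthal relation `sin δᵢ = J h(ψᵢ)` therefore turns each foot
of perpendicular into `(2J)⁻¹ (N(φᵢ) - N(φᵢ₋₁))`, so the sum telescopes to
`(2J)⁻¹ (N(φₙ) - N(φ₀))`, which vanishes because `φₙ = φ₀ + 2π`.
-/

open Real Finset

lemma Finset.sum_Icc_one_sub_pred {G : Type*} [AddCommGroup G] (f : ℕ → G) (n : ℕ) :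
    ∑ i ∈ Icc 1 n, (f i - f (i - 1)) = f n - f 0 := by
  induction n with
  | zero => simp
  | succ k ih => rw [sum_Icc_succ_top (by omega), ih]; simp

lemma two_sin_half_sub_smul_unit_half_add (a b : ℝ) :
    (2 * sin ((b - a) / 2)) • (!₂[cos ((a + b) / 2), sin ((a + b) / 2)] : EuclideanSpace ℝ (Fin 2))
      = !₂[sin b, -cos b] - !₂[sin a, -cos a] := by
  have hsin := Real.sin_sub_sin b a
  have hcos := Real.cos_sub_cos b a
  rw [add_comm b a] at hsin hcos
  ext k
  fin_cases k
  · simp [hsin]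
  · simp only [Fin.mk_one, Fin.isValue, PiLp.smul_apply, Matrix.cons_val_one,
      Matrix.cons_val_fin_one, smul_eq_mul, PiLp.sub_apply, sub_neg_eq_add]
    linear_combination hcos

theorem stmt_11_general
    (h : ℝ → ℝ)
    (n : ℕ)
    (φ ψ δ : ℕ → ℝ)
    (hφ : φ n = φ 0 + 2 * Real.pi)
    (hψ : ∀ i ∈ Finset.Icc 1 n, ψ i = (φ (i - 1) + φ i) / 2)
    (hδ : ∀ i ∈ Finset.Icc 1 n, δ i = (φ i - φ (i - 1)) / 2)
    (J : ℝ) (hJ : 0 < J)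
    (hJoach : ∀ i ∈ Finset.Icc 1 n, Real.sin (δ i) = J * h (ψ i))
    : ∑ i ∈ Finset.Icc 1 n,
      h (ψ i) • (!₂[Real.cos (ψ i), Real.sin (ψ i)] : EuclideanSpace ℝ (Fin 2)) = 0 := by
  set N : ℕ → EuclideanSpace ℝ (Fin 2) := fun i => !₂[sin (φ i), -cos (φ i)]
  have hfoot : ∀ i ∈ Icc 1 n,
      h (ψ i) • (!₂[cos (ψ i), sin (ψ i)] : EuclideanSpace ℝ (Fin 2))
        = (2 * J)⁻¹ • (N i - N (i - 1)) := by
    intro i hi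
    have hh : h (ψ i) = (2 * J)⁻¹ * (2 * sin (δ i)) := by
      rw [hJoach i hi]; field_simp
    rw [hh, mul_smul, hψ i hi, hδ i hi, two_sin_half_sub_smul_unit_half_add]
  have hperiodic : N n = N 0 := by
    simp only [N, hφ, sin_add_two_pi, cos_add_two_pi]
  rw [sum_congr rfl hfoot, ← smul_sum, sum_Icc_one_sub_pred, hperiodic, sub_self, smul_zero]

/-- The feet of the perpendiculars from the center of the ellipse to the tangent lines at the vertices have center of mass at the center. -/
theorem stmt_11
    (a₁ a₂ : ℝ) (ha₁ : 0 < a₁) (ha₂ : 0 < a₂)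
    (h : ℝ → ℝ)
    (hh : ∀ x : ℝ, h x = Real.sqrt (a₁ ^ 2 * Real.cos x ^ 2 + a₂ ^ 2 * Real.sin x ^ 2))
    (n : ℕ) (hn : 2 ≤ n)
    (φ ψ δ : ℕ → ℝ)
    (hφ : φ n = φ 0 + 2 * Real.pi)
    (hψ : ∀ i ∈ Finset.Icc 1 n, ψ i = (φ (i - 1) + φ i) / 2)
    (hδ : ∀ i ∈ Finset.Icc 1 n, δ i = (φ i - φ (i - 1)) / 2)
    (M : ℕ → EuclideanSpace ℝ (Fin 2))
    (hM : ∀ i ∈ Finset.Icc 1 n, M i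
        = h (ψ i) • (!₂[Real.cos (ψ i), Real.sin (ψ i)] : EuclideanSpace ℝ (Fin 2))
        + deriv h (ψ i) • (!₂[-Real.sin (ψ i), Real.cos (ψ i)] : EuclideanSpace ℝ (Fin 2)))
    (hMwrap : M (n + 1) = M 1)
    (chord : ∀ i ∈ Finset.Icc 1 n, ∃ t : ℝ, 0 < t ∧
        M (i + 1) - M i = t • (!₂[-Real.sin (φ i), Real.cos (φ i)] : EuclideanSpace ℝ (Fin 2)))
    (J : ℝ) (hJ : 0 < J)
    (hJoach : ∀ i ∈ Finset.Icc 1 n, Real.sin (δ i) = J * h (ψ i))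
    : ∑ i ∈ Finset.Icc 1 n,
      h (ψ i) • (!₂[Real.cos (ψ i), Real.sin (ψ i)] : EuclideanSpace ℝ (Fin 2)) = 0 :=
  stmt_11_general h n φ ψ δ hφ hψ hδ J hJ hJoach
end

section
/- Let a, b > 0, A = √(a² + ab), B = √(b² + ab). Let α, β ∈ ℝ satisfy (a + b)·cos(α − β) = (a − b)·cos(α + β), and set P = (A cos α, B sin α), Q = (A cos β, B sin β) ∈ ℝ². Then ‖P − Q‖ + ‖P + Q‖ = 2(a + b). -/
open Real

lemma stmt_16_key (a b ca sa cb sb : ℝ)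
    (p1 : sa ^ 2 + ca ^ 2 = 1) (p2 : sb ^ 2 + cb ^ 2 = 1)
    (h : (a + b) * (ca * cb + sa * sb) = (a - b) * (ca * cb - sa * sb)) :
    (a ^ 2 + a * b) * (ca - cb) ^ 2 + (b ^ 2 + a * b) * (sa - sb) ^ 2
      = ((a + b) * (1 - (ca * cb + sa * sb))) ^ 2 := by
  linear_combination ((a + b) - (a + b) * (ca * cb + sa * sb)) * h
    + ((b ^ 2 + a * b) + (a + b) * (a - b) * sb ^ 2) * p1
    + ((b ^ 2 + a * b) + (a + b) * (a - b) * (1 - ca ^ 2)) * p2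

/-- For adjacent vertices `P`, `Q` of a Poncelet billiard quadrilateral between the
confocal ellipses with semiaxes `(A, B)` and `(a, b)`, `A² = a² + ab`, `B² = b² + ab`,
one has `‖P - Q‖ + ‖P + Q‖ = 2(a + b)`. -/
theorem stmt_16 (a b : ℝ) (ha : 0 < a) (hb : 0 < b)
    (A B : ℝ) (hA : A = Real.sqrt (a ^ 2 + a * b)) (hB : B = Real.sqrt (b ^ 2 + a * b))
    (α β : ℝ)
    (hrel : (a + b) * Real.cos (α - β) = (a - b) * Real.cos (α + β))
    (P Q : EuclideanSpace ℝ (Fin 2))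
    (hP : P = ![A * Real.cos α, B * Real.sin α])
    (hQ : Q = ![A * Real.cos β, B * Real.sin β]) :
    ‖P - Q‖ + ‖P + Q‖ = 2 * (a + b) := by
  have hA2 : A ^ 2 = a ^ 2 + a * b := by
    rw [hA, Real.sq_sqrt (by positivity)]
  have hB2 : B ^ 2 = b ^ 2 + a * b := by
    rw [hB, Real.sq_sqrt (by positivity)]
  set ca := Real.cos α; set sa := Real.sin α
  set cb := Real.cos β; set sb := Real.sin β
  have p1 : sa ^ 2 + ca ^ 2 = 1 := Real.sin_sq_add_cos_sq α
  have p2 : sb ^ 2 + cb ^ 2 = 1 := Real.sin_sq_add_cos_sq β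
  have h : (a + b) * (ca * cb + sa * sb) = (a - b) * (ca * cb - sa * sb) := by
    rw [← Real.cos_sub, ← Real.cos_add]; exact hrel
  set C := ca * cb + sa * sb with hC
  have hCle : C ≤ 1 := by rw [hC, ← Real.cos_sub]; exact Real.cos_le_one _
  have hCge : -1 ≤ C := by rw [hC, ← Real.cos_sub]; exact Real.neg_one_le_cos _
  have hs : (0 : ℝ) < a + b := by linarith
  have hnormsub : ‖P - Q‖ = (a + b) * (1 - C) := by
    have : ‖P - Q‖ = Real.sqrt (((a + b) * (1 - C)) ^ 2) := by
      rw [EuclideanSpace.norm_eq]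
      congr 1
      rw [Fin.sum_univ_two]
      have e0 : (P - Q) 0 = A * ca - A * cb := by
        simp [hP, hQ]
      have e1 : (P - Q) 1 = B * sa - B * sb := by
        simp [hP, hQ]
      rw [e0, e1, Real.norm_eq_abs, Real.norm_eq_abs, sq_abs, sq_abs]
      have key := stmt_16_key a b ca sa cb sb p1 p2 h
      rw [hC]
      linear_combination key + (ca - cb) ^ 2 * hA2 + (sa - sb) ^ 2 * hB2
    rw [this, Real.sqrt_sq (by nlinarith)]
  have hnormadd : ‖P + Q‖ = (a + b) * (1 + C) := by
    have : ‖P + Q‖ = Real.sqrt (((a + b) * (1 + C)) ^ 2) := by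
      rw [EuclideanSpace.norm_eq]
      congr 1
      rw [Fin.sum_univ_two]
      have e0 : (P + Q) 0 = A * ca + A * cb := by
        simp [hP, hQ]
      have e1 : (P + Q) 1 = B * sa + B * sb := by
        simp [hP, hQ]
      rw [e0, e1, Real.norm_eq_abs, Real.norm_eq_abs, sq_abs, sq_abs]
      have h' : (a + b) * (ca * (-cb) + sa * (-sb)) = (a - b) * (ca * (-cb) - sa * (-sb)) := by
        linear_combination -h
      have p2' : (-sb) ^ 2 + (-cb) ^ 2 = 1 := by rw [neg_pow, neg_pow]; simpa using p2
      have key := stmt_16_key a b ca sa (-cb) (-sb) p1 p2' h'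
      rw [hC]
      linear_combination key + (ca + cb) ^ 2 * hA2 + (sa + sb) ^ 2 * hB2
    rw [this, Real.sqrt_sq (by nlinarith)]
  rw [hnormsub, hnormadd]; ring
end

section
/- Let a, b > 0, A = √(a² + ab), B = √(b² + ab). Let α, β ∈ ℝ satisfy (a + b)·cos(α − β) = (a − b)·cos(α + β), and set P = (A cos α, B sin α), Q = (A cos β, B sin β) ∈ ℝ². Then ‖P − Q‖·‖P + Q‖ = (a + b)²·sin²(α − β). -/
open Real

/-!
Since `‖P - Q‖² ‖P + Q‖² = (‖P‖² + ‖Q‖²)² - 4 ⟪P, Q⟫²`, it suffices to compute `‖P‖² + ‖Q‖²`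
and `⟪P, Q⟫` for two points of the ellipse; in terms of `c₋ = cos (α - β)` and
`c₊ = cos (α + β)` they are `A² + B² + (A² - B²) c₋ c₊` and `((A² + B²) c₋ + (A² - B²) c₊) / 2`.
With `A² + B² = (a + b)²`, `A² - B² = (a + b)(a - b)` and `(a - b) c₊ = (a + b) c₋` these become
`(a + b)² (1 + c₋²)` and `(a + b)² c₋`, so the product of the squared norms is
`(a + b)⁴ (1 - c₋²)² = (a + b)⁴ sin⁴ (α - β)`.
-/

theorem norm_sub_sq_mul_norm_add_sq {E : Type*} [NormedAddCommGroup E] [InnerProductSpace ℝ E]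
    (x y : E) :
    ‖x - y‖ ^ 2 * ‖x + y‖ ^ 2 = (‖x‖ ^ 2 + ‖y‖ ^ 2) ^ 2 - (2 * inner ℝ x y) ^ 2 := by
  rw [norm_sub_sq_real, norm_add_sq_real]
  ring

theorem norm_sq_of_ofLp_eq_ellipse {A B θ : ℝ} {P : EuclideanSpace ℝ (Fin 2)}
    (hP : P.ofLp = ![A * cos θ, B * sin θ]) :
    ‖P‖ ^ 2 = A ^ 2 * cos θ ^ 2 + B ^ 2 * sin θ ^ 2 := by
  simp [EuclideanSpace.norm_sq_eq, Fin.sum_univ_two, hP, mul_pow]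

theorem norm_sq_add_norm_sq_of_ofLp_eq_ellipse {A B α β : ℝ} {P Q : EuclideanSpace ℝ (Fin 2)}
    (hP : P.ofLp = ![A * cos α, B * sin α]) (hQ : Q.ofLp = ![A * cos β, B * sin β]) :
    ‖P‖ ^ 2 + ‖Q‖ ^ 2 = A ^ 2 + B ^ 2 + (A ^ 2 - B ^ 2) * cos (α - β) * cos (α + β) := by
  rw [norm_sq_of_ofLp_eq_ellipse hP, norm_sq_of_ofLp_eq_ellipse hQ, cos_sub, cos_add]
  linear_combination (B ^ 2 + (A ^ 2 - B ^ 2) * sin β ^ 2) * sin_sq_add_cos_sq α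
    + (A ^ 2 - (A ^ 2 - B ^ 2) * cos α ^ 2) * sin_sq_add_cos_sq β

theorem two_mul_inner_of_ofLp_eq_ellipse {A B α β : ℝ} {P Q : EuclideanSpace ℝ (Fin 2)}
    (hP : P.ofLp = ![A * cos α, B * sin α]) (hQ : Q.ofLp = ![A * cos β, B * sin β]) :
    2 * inner ℝ P Q = (A ^ 2 + B ^ 2) * cos (α - β) + (A ^ 2 - B ^ 2) * cos (α + β) := by
  simp only [PiLp.inner_apply, Fin.sum_univ_two, hP, hQ, cos_sub, cos_add, Fin.isValue,
    Matrix.cons_val_zero, Matrix.cons_val_one, Matrix.cons_val_fin_one, RCLike.inner_apply,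
    ringHom_apply]
  ring

/-- For adjacent vertices `P`, `Q` of a Poncelet billiard quadrilateral between the
confocal ellipses with semiaxes `(A, B)` and `(a, b)`, `A² = a² + ab`, `B² = b² + ab`,
one has `‖P - Q‖ · ‖P + Q‖ = (a + b)² sin²(α - β)`. -/
theorem stmt_17 (a b : ℝ) (ha : 0 < a) (hb : 0 < b)
    (A B : ℝ) (hA : A = Real.sqrt (a ^ 2 + a * b)) (hB : B = Real.sqrt (b ^ 2 + a * b))
    (α β : ℝ)
    (hrel : (a + b) * Real.cos (α - β) = (a - b) * Real.cos (α + β))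
    (P Q : EuclideanSpace ℝ (Fin 2))
    (hP : P = ![A * Real.cos α, B * Real.sin α])
    (hQ : Q = ![A * Real.cos β, B * Real.sin β]) :
    ‖P - Q‖ * ‖P + Q‖ = (a + b) ^ 2 * Real.sin (α - β) ^ 2 := by
  have hA2 : A ^ 2 = a ^ 2 + a * b := by rw [hA, sq_sqrt (by positivity)]
  have hB2 : B ^ 2 = b ^ 2 + a * b := by rw [hB, sq_sqrt (by positivity)]
  have hsum : ‖P‖ ^ 2 + ‖Q‖ ^ 2 = (a + b) ^ 2 * (1 + cos (α - β) ^ 2) := by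
    rw [norm_sq_add_norm_sq_of_ofLp_eq_ellipse hP hQ, hA2, hB2]
    linear_combination (-(a + b) * cos (α - β)) * hrel
  have hinner : 2 * inner ℝ P Q = 2 * (a + b) ^ 2 * cos (α - β) := by
    rw [two_mul_inner_of_ofLp_eq_ellipse hP hQ, hA2, hB2]
    linear_combination (-(a + b)) * hrel
  rw [← sq_eq_sq₀ (by positivity) (by positivity), mul_pow, norm_sub_sq_mul_norm_add_sq, hsum,
    hinner, sin_sq]
  ring
end

section
/- Let a, b > 0, A = √(a² + ab), B = √(b² + ab). Let α, β ∈ ℝ satisfy (a + b)·cos(α − β) = (a − b)·cos(α + β) and sin(α − β) ≠ 0, and set P = (A cos α, B sin α), Q = (A cos β, B sin β) ∈ ℝ². Then the product of the distances from the origin O = (0,0) to the line through P and Q and to the line through Q and −P equals ab: dist(O, line(P, Q))·dist(O, line(Q, −P)) = ab. Equivalently, (A·B·|sin(α − β)|)² / (‖P − Q‖·‖P + Q‖) = ab. -/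
/-!
Write `u = cos (α - β)` and `v = cos (α + β)`. For `P = (A cos α, B sin α)` and
`Q = (A cos β, B sin β)` one has `‖P - Q‖² = (1 - u) (A² (1 - v) + B² (1 + v))` and
`‖P + Q‖² = (1 + u) (A² (1 + v) + B² (1 - v))`. For the confocal pair,
`A² + B² = (a + b)²` and `A² - B² = (a + b) (a - b)`, and the orthogonality relation
`(a - b) v = (a + b) u` turns the second factors into `(a + b)² (1 ∓ u)`. Hence
`‖P - Q‖ ‖P + Q‖ = (a + b)² sin² (α - β)`, while the cross product of `P` and `Q` is
`± A B sin (α - β)` and `A² B² = a b (a + b)²`.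
-/

open Real

noncomputable def ellipsePoint (A B θ : ℝ) : EuclideanSpace ℝ (Fin 2) :=
  !₂[A * cos θ, B * sin θ]

section Ellipse

variable (A B α β : ℝ)

lemma ellipsePoint_cross :
    ellipsePoint A B α 0 * ellipsePoint A B β 1 - ellipsePoint A B α 1 * ellipsePoint A B β 0
      = -(A * B * sin (α - β)) := by
  simp only [ellipsePoint, Matrix.cons_val_zero, Matrix.cons_val_one, sin_sub]
  ring

lemma norm_ellipsePoint_sub_sq :
    ‖ellipsePoint A B α - ellipsePoint A B β‖ ^ 2
      = (1 - cos (α - β)) * (A ^ 2 * (1 - cos (α + β)) + B ^ 2 * (1 + cos (α + β))) := by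
  simp only [EuclideanSpace.real_norm_sq_eq, Fin.sum_univ_two, ellipsePoint, PiLp.sub_apply,
    Matrix.cons_val_zero, Matrix.cons_val_one, cos_sub, cos_add]
  linear_combination (A ^ 2 * sin β ^ 2 + B ^ 2 * cos β ^ 2) * sin_sq_add_cos_sq α
    + (A ^ 2 * (1 - cos α ^ 2) + B ^ 2 * (1 - sin α ^ 2)) * sin_sq_add_cos_sq β

lemma norm_ellipsePoint_add_sq :
    ‖ellipsePoint A B α + ellipsePoint A B β‖ ^ 2
      = (1 + cos (α - β)) * (A ^ 2 * (1 + cos (α + β)) + B ^ 2 * (1 - cos (α + β))) := by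
  simp only [EuclideanSpace.real_norm_sq_eq, Fin.sum_univ_two, ellipsePoint, PiLp.add_apply,
    Matrix.cons_val_zero, Matrix.cons_val_one, cos_sub, cos_add]
  linear_combination (A ^ 2 * sin β ^ 2 + B ^ 2 * cos β ^ 2) * sin_sq_add_cos_sq α
    + (A ^ 2 * (1 - cos α ^ 2) + B ^ 2 * (1 - sin α ^ 2)) * sin_sq_add_cos_sq β

end Ellipse

section Confocal

variable {a b A B α β : ℝ} (hab : 0 ≤ a + b) (hA : A ^ 2 = a ^ 2 + a * b)
  (hB : B ^ 2 = b ^ 2 + a * b) (hrel : (a + b) * cos (α - β) = (a - b) * cos (α + β))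
include hab hA hB hrel

lemma norm_ellipsePoint_sub_of_confocal :
    ‖ellipsePoint A B α - ellipsePoint A B β‖ = (a + b) * (1 - cos (α - β)) := by
  have h : ‖ellipsePoint A B α - ellipsePoint A B β‖ ^ 2 = ((a + b) * (1 - cos (α - β))) ^ 2 := by
    rw [norm_ellipsePoint_sub_sq, hA, hB]
    linear_combination (a + b) * (1 - cos (α - β)) * hrel
  exact (pow_left_inj₀ (norm_nonneg _)
    (mul_nonneg hab (sub_nonneg.2 (cos_le_one _))) two_ne_zero).1 h

lemma norm_ellipsePoint_add_of_confocal :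
    ‖ellipsePoint A B α + ellipsePoint A B β‖ = (a + b) * (1 + cos (α - β)) := by
  have h : ‖ellipsePoint A B α + ellipsePoint A B β‖ ^ 2 = ((a + b) * (1 + cos (α - β))) ^ 2 := by
    rw [norm_ellipsePoint_add_sq, hA, hB]
    linear_combination -(a + b) * (1 + cos (α - β)) * hrel
  exact (pow_left_inj₀ (norm_nonneg _)
    (mul_nonneg hab (neg_le_iff_add_nonneg'.1 (neg_one_le_cos _))) two_ne_zero).1 h

lemma norm_ellipsePoint_sub_mul_norm_add_of_confocal :
    ‖ellipsePoint A B α - ellipsePoint A B β‖ * ‖ellipsePoint A B α + ellipsePoint A B β‖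
      = ((a + b) * sin (α - β)) ^ 2 := by
  rw [norm_ellipsePoint_sub_of_confocal hab hA hB hrel,
    norm_ellipsePoint_add_of_confocal hab hA hB hrel]
  linear_combination -(a + b) ^ 2 * sin_sq_add_cos_sq (α - β)

end Confocal

/-- For a 4-periodic billiard trajectory `P, Q, -P, -Q` in the outer of a pair of
confocal ellipses, the product of the distances from the center to two consecutive
sides equals `ab`. Here `dist(O, line(X, Y)) = |x₁y₂ - x₂y₁| / ‖X - Y‖`. -/
theorem stmt_18 (a b : ℝ) (ha : 0 < a) (hb : 0 < b)
    (A B : ℝ) (hA : A = Real.sqrt (a ^ 2 + a * b)) (hB : B = Real.sqrt (b ^ 2 + a * b))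
    (α β : ℝ)
    (hrel : (a + b) * Real.cos (α - β) = (a - b) * Real.cos (α + β))
    (hsin : Real.sin (α - β) ≠ 0)
    (P Q : EuclideanSpace ℝ (Fin 2))
    (hP : P = ![A * Real.cos α, B * Real.sin α])
    (hQ : Q = ![A * Real.cos β, B * Real.sin β]) :
    (|P 0 * Q 1 - P 1 * Q 0| / ‖P - Q‖)
        * (|Q 0 * (-P) 1 - Q 1 * (-P) 0| / ‖Q - (-P)‖) = a * b ∧
    (A * B * |Real.sin (α - β)|) ^ 2 / (‖P - Q‖ * ‖P + Q‖) = a * b := by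
  have hab : 0 < a + b := add_pos ha hb
  have hA2 : A ^ 2 = a ^ 2 + a * b := by rw [hA, sq_sqrt (by positivity)]
  have hB2 : B ^ 2 = b ^ 2 + a * b := by rw [hB, sq_sqrt (by positivity)]
  have hP' : P = ellipsePoint A B α := WithLp.ofLp_injective 2 hP
  have hQ' : Q = ellipsePoint A B β := WithLp.ofLp_injective 2 hQ
  have hcross : |P 0 * Q 1 - P 1 * Q 0| = A * B * |sin (α - β)| := by
    rw [hP', hQ', ellipsePoint_cross, abs_neg, abs_mul,
      abs_of_nonneg (mul_nonneg (hA ▸ sqrt_nonneg _) (hB ▸ sqrt_nonneg _))]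
  have hratio : (A * B * |sin (α - β)|) ^ 2 / (‖P - Q‖ * ‖P + Q‖) = a * b := by
    rw [hP', hQ', norm_ellipsePoint_sub_mul_norm_add_of_confocal hab.le hA2 hB2 hrel,
      mul_pow _ |_|, sq_abs, div_eq_iff (pow_ne_zero 2 (mul_ne_zero hab.ne' hsin))]
    linear_combination (B ^ 2 * sin (α - β) ^ 2) * hA2 + ((a ^ 2 + a * b) * sin (α - β) ^ 2) * hB2
  refine ⟨?_, hratio⟩
  have hcross_neg : Q 0 * (-P) 1 - Q 1 * (-P) 0 = P 0 * Q 1 - P 1 * Q 0 := by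
    simp only [PiLp.neg_apply]
    ring
  rw [hcross_neg, hcross, sub_neg_eq_add, add_comm Q, div_mul_div_comm, ← sq, hratio]
end
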